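/- arXiv:2311.01351 — 2 statements merged into one kernel-verified Lean document; each statement's English description precedes it below -/
import Mathlib

section
/- Soundness of Axiom Min for minimal simplicial models: for every minimal simplicial model C, every world w of C, every formula φ of L_D, and every proper subset B ⊊ A, we have C,w ⊨ alive_B ∧ dead_{A∖B} ⇒ D_B dead_{A∖B}. Consequently the proof system SCmin is sound with respect to the class of minimal simplicial models. -/
attribute [local instance] Classical.propDecidable

noncomputable section

/-- Formulas of the epistemic language `L_D` with distributed knowledge `D_B`
for nonempty groups `B` of agents. -/
inductive Form (A AP : Type) : Type
  | atom : AP → Form A AP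
  | neg  : Form A AP → Form A AP
  | and  : Form A AP → Form A AP → Form A AP
  | dk   : (B : Finset A) → B.Nonempty → Form A AP → Form A AP

namespace Form

variable {A AP : Type}

/-- Disjunction, `φ ∨ ψ := ¬(¬φ ∧ ¬ψ)`. -/
def or (φ ψ : Form A AP) : Form A AP := neg ((neg φ).and (neg ψ))

/-- Implication, `φ ⇒ ψ := ¬φ ∨ ψ`. -/
def imp (φ ψ : Form A AP) : Form A AP := (neg φ).or ψ

/-- `⊤ := p ∨ ¬p`. -/
def verum [Nonempty AP] : Form A AP :=
  (atom (Classical.arbitrary AP)).or (neg (atom (Classical.arbitrary AP)))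

/-- `⊥ := ¬⊤`. -/
def falsum [Nonempty AP] : Form A AP := neg verum

/-- Individual knowledge `K_a φ := D_{{a}} φ`. -/
def K (a : A) (φ : Form A AP) : Form A AP := dk {a} (Finset.singleton_nonempty a) φ

/-- `dead_a := K_a ⊥`. -/
def deadAgent [Nonempty AP] (a : A) : Form A AP := K a falsum

/-- `alive_a := ¬dead_a`. -/
def aliveAgent [Nonempty AP] (a : A) : Form A AP := (deadAgent a).neg

/-- `alive_B := ¬ D_B ⊥`. -/
def aliveGrp [Nonempty AP] (B : Finset A) (hB : B.Nonempty) : Form A AP := (dk B hB falsum).neg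

/-- Finite conjunction. -/
def bigAnd [Nonempty AP] : List (Form A AP) → Form A AP
  | [] => verum
  | φ :: t => φ.and (bigAnd t)

/-- Finite disjunction. -/
def bigOr [Nonempty AP] : List (Form A AP) → Form A AP
  | [] => falsum
  | φ :: t => φ.or (bigOr t)

/-- `dead_C := ⋀_{a ∈ C} dead_a`. -/
def deadGrp [Nonempty AP] (C : Finset A) : Form A AP := bigAnd (C.toList.map deadAgent)

end Form

/-- A propositional tautology: true under every assignment that interprets `¬` and `∧`
classically (atoms and `D_B`-formulas are treated as opaque). -/
def IsTaut {A AP : Type} (φ : Form A AP) : Prop :=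
  ∀ v : Form A AP → Prop,
    (∀ ψ : Form A AP, v ψ.neg ↔ ¬ v ψ) →
    (∀ ψ χ : Form A AP, v (ψ.and χ) ↔ (v ψ ∧ v χ)) →
    v φ

theorem unionNE {α : Type} [DecidableEq α] {s t : Finset α} (h : s.Nonempty) :
    (s ∪ t).Nonempty :=
  ⟨h.choose, Finset.mem_union_left _ h.choose_spec⟩

section ProofSystem

variable {A AP : Type} [Fintype A] [Nonempty AP]

/-- The proof system `SC` (axioms `K`, `B`, `4`, `Mono`, `Union`, `NE`, `P`, all
propositional tautologies, modus ponens and necessitation), extended by an arbitrary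
additional set `Ax` of axioms. -/
inductive Prf (Ax : Form A AP → Prop) : Form A AP → Prop
  | taut {φ : Form A AP} : IsTaut φ → Prf Ax φ
  | mp {φ ψ : Form A AP} : Prf Ax (φ.imp ψ) → Prf Ax φ → Prf Ax ψ
  | nec {φ : Form A AP} (B : Finset A) (hB : B.Nonempty) :
      Prf Ax φ → Prf Ax (Form.dk B hB φ)
  | axK {φ ψ : Form A AP} (B : Finset A) (hB : B.Nonempty) :
      Prf Ax ((Form.dk B hB (φ.imp ψ)).imp ((Form.dk B hB φ).imp (Form.dk B hB ψ)))
  | axB {φ : Form A AP} (B : Finset A) (hB : B.Nonempty) :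
      Prf Ax (φ.imp (Form.dk B hB (Form.neg (Form.dk B hB φ.neg))))
  | ax4 {φ : Form A AP} (B : Finset A) (hB : B.Nonempty) :
      Prf Ax ((Form.dk B hB φ).imp (Form.dk B hB (Form.dk B hB φ)))
  | axMono {φ : Form A AP} (B B' : Finset A) (hB : B.Nonempty) (hB' : B'.Nonempty)
      (hsub : B ⊆ B') : Prf Ax ((Form.dk B hB φ).imp (Form.dk B' hB' φ))
  | axUnion (B B' : Finset A) (hB : B.Nonempty) (hB' : B'.Nonempty) :
      Prf Ax (((Form.aliveGrp B hB).and (Form.aliveGrp B' hB')).imp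
        (Form.aliveGrp (B ∪ B') (unionNE hB)))
  | axNE : Prf Ax (Form.bigOr ((Finset.univ : Finset A).toList.map Form.aliveAgent))
  | axP {φ : Form A AP} (B : Finset A) (hB : B.Nonempty) :
      Prf Ax ((((Form.aliveGrp B hB).and (Form.deadGrp Bᶜ)).and φ).imp
        (Form.dk B hB ((Form.deadGrp Bᶜ).imp φ)))
  | extra {φ : Form A AP} : Ax φ → Prf Ax φ

/-- Provability in `SC` itself (no extra axioms). -/
def SC : Form A AP → Prop := Prf (fun _ => False)

/-- Instances of Axiom `Min : alive_B ∧ dead_{A∖B} ⇒ D_B dead_{A∖B}` for `B ⊊ A`. -/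
def MinAx : Form A AP → Prop := fun φ =>
  ∃ (B : Finset A) (hB : B.Nonempty), B ≠ Finset.univ ∧
    φ = ((Form.aliveGrp B hB).and (Form.deadGrp Bᶜ)).imp (Form.dk B hB (Form.deadGrp Bᶜ))

/-- Instances of Axiom `Max : alive_B ⇒ ¬ D_B ¬ dead_{A∖B}` for `B ⊊ A`. -/
def MaxAx : Form A AP → Prop := fun φ =>
  ∃ (B : Finset A) (hB : B.Nonempty), B ≠ Finset.univ ∧
    φ = (Form.aliveGrp B hB).imp (Form.neg (Form.dk B hB (Form.neg (Form.deadGrp Bᶜ))))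

/-- Provability in `SCmin = SC + Min`. -/
def SCmin : Form A AP → Prop := Prf MinAx

/-- Provability in `SCmax = SC + Max`. -/
def SCmax : Form A AP → Prop := Prf MaxAx

/-- `Γ ⊢_P φ` : some finite conjunction of members of `Γ` provably implies `φ`. -/
def ProvesFrom (P : Form A AP → Prop) (Γ : Set (Form A AP)) (φ : Form A AP) : Prop :=
  ∃ L : List (Form A AP), (∀ γ ∈ L, γ ∈ Γ) ∧ P ((Form.bigAnd L).imp φ)

/-- Consistency of a set of formulas with respect to a provability predicate `P`. -/
def ConsistentSet (P : Form A AP → Prop) (Γ : Set (Form A AP)) : Prop :=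
  ¬ ProvesFrom P Γ Form.falsum

/-- Maximal consistent sets of formulas. -/
def MaxConsistent (P : Form A AP → Prop) (Γ : Set (Form A AP)) : Prop :=
  ConsistentSet P Γ ∧ ∀ φ ∉ Γ, ¬ ConsistentSet P (insert φ Γ)

end ProofSystem

/-! ### Simplicial models -/

/-- The data of a (generalized) simplicial model: a set `S` of simplexes over the vertex
type `V`, a colouring `chi`, a set of worlds `Wld` and a labelling of worlds. -/
structure SimpData (A AP V : Type) where
  S : Set (Finset V)
  chi : V → A
  Wld : Set (Finset V)
  label : Finset V → Set AP

namespace SimpData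

variable {A AP V : Type}

/-- A facet: a simplex maximal under inclusion. -/
def IsFacet (C : SimpData A AP V) (X : Finset V) : Prop :=
  X ∈ C.S ∧ ∀ Y ∈ C.S, X ⊆ Y → X = Y

/-- `⟨V,S,chi⟩` is a chromatic simplicial complex: simplexes are nonempty, every
singleton is a simplex, `S` is downward closed, and every simplex has pairwise
distinct colours. -/
def IsComplex (C : SimpData A AP V) : Prop :=
  (∀ X ∈ C.S, X.Nonempty) ∧
  (∀ v : V, ({v} : Finset V) ∈ C.S) ∧
  (∀ X ∈ C.S, ∀ Y : Finset V, Y ⊆ X → Y.Nonempty → Y ∈ C.S) ∧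
  (∀ X ∈ C.S, ∀ v ∈ X, ∀ w ∈ X, C.chi v = C.chi w → v = w)

/-- `C` is a generalized simplicial model: a chromatic simplicial complex together
with a set of worlds `Wld` with `Facets(C) ⊆ Wld ⊆ S`. -/
def IsModel (C : SimpData A AP V) : Prop :=
  C.IsComplex ∧ (∀ X, C.IsFacet X → X ∈ C.Wld) ∧ C.Wld ⊆ C.S

/-- The model is minimal: the worlds are exactly the facets. -/
def Minimal (C : SimpData A AP V) : Prop := ∀ X, X ∈ C.Wld ↔ C.IsFacet X

/-- The model is maximal: every simplex is a world. -/
def Maximal (C : SimpData A AP V) : Prop := C.Wld = C.S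

end SimpData

/-- Satisfaction on simplicial models: `C,w ⊨ D_B φ` iff `φ` holds at every world `w'`
with `B ⊆ chi(w ∩ w')`. -/
def SimpData.sat {A AP V : Type} (C : SimpData A AP V) : Finset V → Form A AP → Prop
  | w, .atom p => p ∈ C.label w
  | w, .neg φ => ¬ C.sat w φ
  | w, .and φ ψ => C.sat w φ ∧ C.sat w ψ
  | w, .dk B _ φ => ∀ w' ∈ C.Wld, (↑B : Set A) ⊆ C.chi '' ((↑w : Set V) ∩ ↑w') → C.sat w' φ

/-! ### Partial epistemic models -/

/-- The data of a partial epistemic model: an accessibility relation for each agent and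
a labelling of worlds. -/
structure PEData (A AP W : Type) where
  rel : A → W → W → Prop
  label : W → Set AP

namespace PEData

variable {A AP W : Type}

/-- Each relation is a partial equivalence relation (symmetric and transitive). -/
def IsPE (M : PEData A AP W) : Prop := ∀ a : A, Symmetric (M.rel a) ∧ Transitive (M.rel a)

/-- The set of agents alive in a world. -/
def live (M : PEData A AP W) (w : W) : Set A := {a | M.rel a w w}

/-- Every world has at least one alive agent. -/
def NoEmptyWorld (M : PEData A AP W) : Prop := ∀ w : W, (M.live w).Nonempty

/-- Distinct worlds with the same alive agents are distinguished by some alive agent. -/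
def Proper (M : PEData A AP W) : Prop :=
  ∀ w w' : W, w ≠ w' → M.live w = M.live w' → ∃ a ∈ M.live w, ¬ M.rel a w w'

/-- The model has no sub-world. -/
def Minimal (M : PEData A AP W) : Prop :=
  ∀ w w' : W, M.live w ⊂ M.live w' → ∃ a ∈ M.live w, ¬ M.rel a w w'

/-- The model has all sub-worlds. -/
def Maximal (M : PEData A AP W) : Prop :=
  ∀ w' : W, ∀ B : Set A, B.Nonempty → B ⊂ M.live w' →
    ∃ w : W, M.live w = B ∧ ∀ a ∈ B, M.rel a w w'

end PEData

/-- Satisfaction on partial epistemic models: `M,w ⊨ D_B φ` iff `φ` holds at every `w'`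
with `w ∼_a w'` for all `a ∈ B`. -/
def PEData.sat {A AP W : Type} (M : PEData A AP W) : W → Form A AP → Prop
  | w, .atom p => p ∈ M.label w
  | w, .neg φ => ¬ M.sat w φ
  | w, .and φ ψ => M.sat w φ ∧ M.sat w ψ
  | w, .dk B _ φ => ∀ w' : W, (∀ a ∈ B, M.rel a w w') → M.sat w' φ

/-- The partial epistemic model `κ(C)` associated with a simplicial model `C`:
same worlds, `w ∼_a w'` iff `a ∈ chi(w ∩ w')`, same labelling. -/
def kappa {A AP V : Type} (C : SimpData A AP V) : PEData A AP {w : Finset V // w ∈ C.Wld} where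
  rel := fun a w w' => a ∈ C.chi '' ((↑w.1 : Set V) ∩ ↑w'.1)
  label := fun w => C.label w.1

/-- Vertices of `σ(M)`: pairs `v^w_a = (a, [w]_a)` with `a` alive in `w`. -/
def sigmaVert {A AP W : Type} (M : PEData A AP W) : Type :=
  {v : A × Set W // ∃ w : W, M.rel v.1 w w ∧ v.2 = {w' | M.rel v.1 w w'}}

/-- The world `X_w = { v^w_a | a ∈ live(w) }` of `σ(M)`. -/
def sigmaWorld {A AP W : Type} [Fintype A] (M : PEData A AP W) (w : W) :
    Finset (sigmaVert M) :=
  ((Finset.univ : Finset A).filter (fun a => M.rel a w w)).attach.image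
    (fun a => ⟨(a.1, {w' | M.rel a.1 w w'}),
      ⟨w, by exact (Finset.mem_filter.mp a.2).2, rfl⟩⟩)

/-- The simplicial model `σ(M)` associated with a partial epistemic model `M`:
simplexes are the nonempty subsets of the sets `X_w`, worlds are the `X_w`,
colouring is the first projection, and `ℓ(X_w) = L(w)`. -/
def sigmaModel {A AP W : Type} [Fintype A] (M : PEData A AP W) :
    SimpData A AP (sigmaVert M) where
  S := {X | X.Nonempty ∧ ∃ w : W, X ⊆ sigmaWorld M w}
  chi := fun v => v.1.1
  Wld := {X | ∃ w : W, X = sigmaWorld M w}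
  label := fun X => {p | ∃ w : W, X = sigmaWorld M w ∧ p ∈ M.label w}

/-! ### Pseudo-models, the canonical model and unravelling -/

/-- The data of a pseudo-model: a relation `∼_B` for every group `B ⊆ A`. -/
structure PseudoData (A AP W : Type) where
  rel : Finset A → W → W → Prop
  label : W → Set AP

/-- `M` is a pseudo-model: each `∼_B` is symmetric and transitive, the relations are
antitone (`∼_{B'} ⊆ ∼_B` for `B ⊆ B'`), and `w ∼_B w` together with `w ∼_{B'} w`
implies `w ∼_{B ∪ B'} w`. -/
def PseudoData.IsPseudo {A AP W : Type} [DecidableEq A] (M : PseudoData A AP W) : Prop :=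
  (∀ B : Finset A, Symmetric (M.rel B)) ∧
  (∀ B : Finset A, Transitive (M.rel B)) ∧
  (∀ B B' : Finset A, B ⊆ B' → ∀ w w' : W, M.rel B' w w' → M.rel B w w') ∧
  (∀ (w : W) (B B' : Finset A), M.rel B w w → M.rel B' w w → M.rel (B ∪ B') w w)

/-- Satisfaction on pseudo-models: `D_B φ` quantifies over `∼_B`-successors. -/
def PseudoData.sat {A AP W : Type} (M : PseudoData A AP W) : W → Form A AP → Prop
  | w, .atom p => p ∈ M.label w
  | w, .neg φ => ¬ M.sat w φ
  | w, .and φ ψ => M.sat w φ ∧ M.sat w ψ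
  | w, .dk B _ φ => ∀ w' : W, M.rel B w w' → M.sat w' φ

/-- The canonical pseudo-model of a proof system `P`: worlds are the maximal
`P`-consistent sets, `Γ ∼_B Δ` iff every `φ` with `D_B φ ∈ Γ` satisfies `φ ∈ Δ`,
and `L(Γ) = Γ ∩ AP`. -/
def canonicalPsm (A AP : Type) [Fintype A] [Nonempty AP] (P : Form A AP → Prop) :
    PseudoData A AP {Γ : Set (Form A AP) // MaxConsistent P Γ} where
  rel := fun B Γ Δ => ∀ (hB : B.Nonempty) (φ : Form A AP), Form.dk B hB φ ∈ Γ.1 → φ ∈ Δ.1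
  label := fun Γ => {p | Form.atom p ∈ Γ.1}

/-- `IsHist M w l` : the sequence starting at `w` with steps `l` is a history of `M`. -/
def IsHist {A AP W : Type} (M : PseudoData A AP W) : W → List (Finset A × W) → Prop
  | _, [] => True
  | w, (B, w') :: t => M.rel B w w' ∧ IsHist M w' t

/-- A history `(w₀, B₁, w₁, …, B_k, w_k)` of a pseudo-model `M`. -/
structure Hist {A AP W : Type} (M : PseudoData A AP W) where
  first : W
  steps : List (Finset A × W)
  valid : IsHist M first steps

/-- The last world of a history. -/
def Hist.last {A AP W : Type} {M : PseudoData A AP W} (h : Hist M) : W :=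
  (h.steps.map Prod.snd).getLastD h.first

/-- `h →_a h'` : `h'` extends `h` by one step `(B, w)` with `a ∈ B`. -/
def histStep {A AP W : Type} (M : PseudoData A AP W) (a : A) (h h' : Hist M) : Prop :=
  ∃ (B : Finset A) (w : W), a ∈ B ∧ h'.first = h.first ∧ h'.steps = h.steps ++ [(B, w)]

/-- `∼^U_a` : the symmetric-transitive closure of `→_a`. -/
def histRel {A AP W : Type} (M : PseudoData A AP W) (a : A) : Hist M → Hist M → Prop :=
  Relation.TransGen (fun h h' => histStep M a h h' ∨ histStep M a h' h)

/-- The unravelling `U(M)` of a pseudo-model `M`: worlds are histories, relations are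
the `∼^U_a`, and `L^U(h) = L(last h)`. -/
def unravel {A AP W : Type} (M : PseudoData A AP W) : PEData A AP (Hist M) where
  rel := histRel M
  label := fun h => M.label h.last

/-- World-equivalence `w ≡ w'` : same alive agents and related by every alive agent. -/
def pequiv {A AP W : Type} (M : PEData A AP W) (w w' : W) : Prop :=
  M.live w = M.live w' ∧ ∀ a ∈ M.live w, M.rel a w w'

/-- The quotient of a partial epistemic model by world-equivalence. -/
def properify {A AP W : Type} (M : PEData A AP W) : PEData A AP (Quot (pequiv M)) where
  rel := fun a x y => ∃ w w' : W, x = Quot.mk _ w ∧ y = Quot.mk _ w' ∧ M.rel a w w'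
  label := fun x => {p | ∃ w : W, x = Quot.mk _ w ∧ p ∈ M.label w}

/-! ### Local simplicial models, morphisms and the guarded positive fragment -/

/-- The data of a local simplicial model: atomic propositions label the vertices. -/
structure LocalSimpData (A AP V : Type) where
  S : Set (Finset V)
  chi : V → A
  Wld : Set (Finset V)
  vlabel : V → Set AP

namespace LocalSimpData

variable {A AP V : Type}

/-- A facet: a simplex maximal under inclusion. -/
def IsFacet (C : LocalSimpData A AP V) (X : Finset V) : Prop :=
  X ∈ C.S ∧ ∀ Y ∈ C.S, X ⊆ Y → X = Y

/-- `C` is a local simplicial model with respect to the ownership map `owner : AP → A`: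
a chromatic simplicial complex with `Facets ⊆ Wld ⊆ S`, where each vertex is labelled
with atomic propositions belonging to its colour. -/
def IsModel (C : LocalSimpData A AP V) (owner : AP → A) : Prop :=
  (∀ X ∈ C.S, X.Nonempty) ∧
  (∀ v : V, ({v} : Finset V) ∈ C.S) ∧
  (∀ X ∈ C.S, ∀ Y : Finset V, Y ⊆ X → Y.Nonempty → Y ∈ C.S) ∧
  (∀ X ∈ C.S, ∀ v ∈ X, ∀ w ∈ X, C.chi v = C.chi w → v = w) ∧
  (∀ X, C.IsFacet X → X ∈ C.Wld) ∧ C.Wld ⊆ C.S ∧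
  (∀ v : V, ∀ p ∈ C.vlabel v, owner p = C.chi v)

/-- The labelling of a world: the union of the labellings of its vertices. -/
def wlabel (C : LocalSimpData A AP V) (X : Finset V) : Set AP :=
  ⋃ v ∈ X, C.vlabel v

end LocalSimpData

/-- Purely propositional formulas. -/
inductive PForm (AP : Type) : Type
  | atom : AP → PForm AP
  | neg : PForm AP → PForm AP
  | and : PForm AP → PForm AP → PForm AP

/-- The atomic propositions occurring in a propositional formula. -/
def PForm.atoms {AP : Type} : PForm AP → Set AP
  | .atom p => {p}
  | .neg ψ => ψ.atoms
  | .and ψ χ => ψ.atoms ∪ χ.atoms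

/-- Satisfaction of propositional formulas at a world of a local simplicial model. -/
def PForm.psat {A AP V : Type} (C : LocalSimpData A AP V) (w : Finset V) : PForm AP → Prop
  | .atom p => p ∈ C.wlabel w
  | .neg ψ => ¬ PForm.psat C w ψ
  | .and ψ χ => PForm.psat C w ψ ∧ PForm.psat C w χ

/-- The guarded positive epistemic fragment:
`φ ::= (alive_B ⇒ ψ_B) | φ∧φ | φ∨φ | D_U φ | C_U φ`. -/
inductive GForm (A AP : Type) : Type
  | guard : Finset A → PForm AP → GForm A AP
  | and : GForm A AP → GForm A AP → GForm A AP
  | or : GForm A AP → GForm A AP → GForm A AP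
  | dk : Finset A → GForm A AP → GForm A AP
  | ck : Finset A → GForm A AP → GForm A AP

/-- Well-formedness of guarded formulas: in a guard `alive_B ⇒ ψ_B`, all atomic
propositions of `ψ_B` belong to agents of `B`. -/
def GForm.WF {A AP : Type} (owner : AP → A) : GForm A AP → Prop
  | .guard B ψ => ∀ p ∈ ψ.atoms, owner p ∈ B
  | .and φ₁ φ₂ => φ₁.WF owner ∧ φ₂.WF owner
  | .or φ₁ φ₂ => φ₁.WF owner ∧ φ₂.WF owner
  | .dk _ φ => φ.WF owner
  | .ck _ φ => φ.WF owner

/-- Reachability through a sequence of worlds, consecutive ones sharing a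
`U`-coloured simplex. -/
def creach {A AP V : Type} (C : LocalSimpData A AP V) (U : Finset A) :
    Finset V → Finset V → Prop :=
  Relation.ReflTransGen
    (fun X Y => Y ∈ C.Wld ∧ (↑U : Set A) ⊆ C.chi '' ((↑X : Set V) ∩ ↑Y))

/-- Satisfaction of guarded positive formulas on local simplicial models. -/
def GForm.gsat {A AP V : Type} (C : LocalSimpData A AP V) :
    Finset V → GForm A AP → Prop
  | w, .guard B ψ => ((↑B : Set A) ⊆ C.chi '' (↑w : Set V)) → ψ.psat C w
  | w, .and φ₁ φ₂ => φ₁.gsat C w ∧ φ₂.gsat C w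
  | w, .or φ₁ φ₂ => φ₁.gsat C w ∨ φ₂.gsat C w
  | w, .dk U φ => ∀ w' ∈ C.Wld, (↑U : Set A) ⊆ C.chi '' ((↑w : Set V) ∩ ↑w') → φ.gsat C w'
  | w, .ck U φ => ∀ w' ∈ C.Wld, creach C U w w' → φ.gsat C w'

/-- Image of a simplex under a vertex map. -/
def fimage {V V' : Type} (f : V → V') (X : Finset V) : Finset V' :=
  X.image f

/-- Morphisms of local simplicial models: map simplexes to simplexes and worlds to
worlds, preserving colours and vertex labellings. -/
def IsMorphism {A AP V V' : Type} (C : LocalSimpData A AP V) (D : LocalSimpData A AP V')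
    (f : V → V') : Prop :=
  (∀ X ∈ C.S, fimage f X ∈ D.S) ∧
  (∀ X ∈ C.Wld, fimage f X ∈ D.Wld) ∧
  (∀ v : V, D.chi (f v) = C.chi v) ∧
  (∀ v : V, D.vlabel (f v) = C.vlabel v)

end

/-! `D_B` quantifies over the worlds sharing a `B`-coloured face with the current one. Since
the colours of a simplex are distinct, a world all of whose colours lie in `B` (that is, one
satisfying `dead_{A∖B}`) is a face of every world it shares `B` with. In a minimal model worlds
are facets, so such a world shares `B` only with itself, which is Axiom `Min`; applying the same
argument in both directions gives Axiom `P`, and the remaining axioms of `SC` hold in every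
model. -/

namespace SimpData

variable {A AP V : Type} {C : SimpData A AP V}

def Shares (C : SimpData A AP V) (B : Finset A) (w w' : Finset V) : Prop :=
  (↑B : Set A) ⊆ C.chi '' ((↑w : Set V) ∩ ↑w')

section Shares

variable {B B' : Finset A} {w w' w'' : Finset V}

lemma shares_self_iff : C.Shares B w w ↔ (↑B : Set A) ⊆ C.chi '' ↑w := by
  rw [Shares, Set.inter_self]

lemma Shares.symm (h : C.Shares B w w') : C.Shares B w' w := by
  rwa [Shares, Set.inter_comm]

lemma Shares.mono (hB : B ⊆ B') (h : C.Shares B' w w') : C.Shares B w w' :=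
  Set.Subset.trans (Finset.coe_subset.2 hB) h

lemma Shares.trans (hinj : Set.InjOn C.chi ↑w') (h₁ : C.Shares B w w')
    (h₂ : C.Shares B w' w'') : C.Shares B w w'' := by
  intro a ha
  obtain ⟨u, ⟨huw, huw'⟩, rfl⟩ := h₁ ha
  obtain ⟨u', ⟨hu'w', hu'w''⟩, hu'⟩ := h₂ ha
  exact ⟨u, ⟨huw, hinj hu'w' huw' hu' ▸ hu'w''⟩, rfl⟩

lemma Shares.subset (hinj : Set.InjOn C.chi ↑w) (hw : C.chi '' ↑w ⊆ ↑B)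
    (h : C.Shares B w w') : w ⊆ w' := by
  intro v hv
  obtain ⟨u, ⟨huw, huw'⟩, hu⟩ := h (hw ⟨v, hv, rfl⟩)
  exact hinj huw hv hu ▸ huw'

end Shares

lemma IsModel.injOn_chi (hM : C.IsModel) {w : Finset V} (hw : w ∈ C.Wld) :
    Set.InjOn C.chi ↑w :=
  fun u hu v hv => hM.1.2.2.2 w (hM.2.2 hw) u hu v hv

section Satisfaction

variable {w : Finset V}

@[simp] lemma sat_neg (φ : Form A AP) : C.sat w φ.neg ↔ ¬ C.sat w φ := Iff.rfl

@[simp] lemma sat_and (φ ψ : Form A AP) : C.sat w (φ.and ψ) ↔ C.sat w φ ∧ C.sat w ψ :=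
  Iff.rfl

@[simp] lemma sat_dk (B : Finset A) (hB : B.Nonempty) (φ : Form A AP) :
    C.sat w (Form.dk B hB φ) ↔ ∀ w' ∈ C.Wld, C.Shares B w w' → C.sat w' φ :=
  Iff.rfl

@[simp] lemma sat_or (φ ψ : Form A AP) : C.sat w (φ.or ψ) ↔ C.sat w φ ∨ C.sat w ψ := by
  simp only [Form.or, sat_neg, sat_and]
  tauto

@[simp] lemma sat_imp (φ ψ : Form A AP) : C.sat w (φ.imp ψ) ↔ (C.sat w φ → C.sat w ψ) := by
  simp only [Form.imp, sat_or, sat_neg]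
  tauto

variable [Nonempty AP]

@[simp] lemma sat_verum : C.sat w (Form.verum : Form A AP) := by
  simp only [Form.verum, sat_or, sat_neg]
  tauto

@[simp] lemma sat_falsum : ¬ C.sat w (Form.falsum : Form A AP) :=
  fun h => h sat_verum

lemma sat_bigAnd (L : List (Form A AP)) : C.sat w (Form.bigAnd L) ↔ ∀ φ ∈ L, C.sat w φ := by
  induction L with
  | nil => simp [Form.bigAnd]
  | cons φ t ih => simp [Form.bigAnd, ih]

lemma sat_bigOr (L : List (Form A AP)) : C.sat w (Form.bigOr L) ↔ ∃ φ ∈ L, C.sat w φ := by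
  induction L with
  | nil => simp [Form.bigOr]
  | cons φ t ih => simp [Form.bigOr, ih]

lemma sat_aliveGrp (hw : w ∈ C.Wld) (B : Finset A) (hB : B.Nonempty) :
    C.sat w (Form.aliveGrp B hB : Form A AP) ↔ (↑B : Set A) ⊆ C.chi '' ↑w := by
  simp only [Form.aliveGrp, sat_neg, sat_dk, sat_falsum, imp_false, not_forall, not_not,
    exists_prop]
  exact ⟨fun ⟨_, _, h⟩ => Set.Subset.trans h (Set.image_mono Set.inter_subset_left),
    fun h => ⟨w, hw, shares_self_iff.2 h⟩⟩

lemma sat_deadAgent (hw : w ∈ C.Wld) (a : A) :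
    C.sat w (Form.deadAgent a : Form A AP) ↔ a ∉ C.chi '' ↑w := by
  have h := sat_aliveGrp (C := C) (AP := AP) hw {a} (Finset.singleton_nonempty a)
  rw [Finset.coe_singleton, Set.singleton_subset_iff] at h
  exact not_not.symm.trans (not_congr h)

lemma sat_deadGrp (hw : w ∈ C.Wld) (D : Finset A) :
    C.sat w (Form.deadGrp D : Form A AP) ↔ ∀ a ∈ D, a ∉ C.chi '' ↑w := by
  simp [Form.deadGrp, sat_bigAnd, sat_deadAgent hw]

lemma sat_deadGrp_compl [Fintype A] (hw : w ∈ C.Wld) (B : Finset A) :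
    C.sat w (Form.deadGrp Bᶜ : Form A AP) ↔ C.chi '' ↑w ⊆ ↑B := by
  rw [sat_deadGrp hw]
  simp only [Finset.mem_compl, Set.subset_def, Finset.mem_coe]
  exact ⟨fun h a ha => by_contra fun haB => h a haB ha, fun h a haB ha => haB (h a ha)⟩

end Satisfaction

section Axioms

variable [Fintype A] [Nonempty AP] {w : Finset V}

lemma sat_axNE (hM : C.IsModel) (hw : w ∈ C.Wld) :
    C.sat w (Form.bigOr ((Finset.univ : Finset A).toList.map Form.aliveAgent) : Form A AP) := by
  obtain ⟨v, hv⟩ := hM.1.1 w (hM.2.2 hw)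
  simp only [sat_bigOr, List.mem_map, Finset.mem_toList, Finset.mem_univ, true_and,
    exists_exists_eq_and, Form.aliveAgent, sat_neg, sat_deadAgent hw, not_not]
  exact ⟨C.chi v, v, hv, rfl⟩

lemma sat_axP (hM : C.IsModel) (hw : w ∈ C.Wld) (B : Finset A) (hB : B.Nonempty)
    (φ : Form A AP) :
    C.sat w ((((Form.aliveGrp B hB).and (Form.deadGrp Bᶜ)).and φ).imp
      (Form.dk B hB ((Form.deadGrp Bᶜ).imp φ))) := by
  simp only [sat_imp, sat_and, sat_dk, sat_deadGrp_compl hw]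
  rintro ⟨⟨-, hwB⟩, hφ⟩ w' hw' hshare hw'B
  rw [sat_deadGrp_compl hw'] at hw'B
  have : w = w' := (hshare.subset (hM.injOn_chi hw) hwB).antisymm
    (hshare.symm.subset (hM.injOn_chi hw') hw'B)
  exact this ▸ hφ

lemma sat_minAx (hM : C.IsModel) (hmin : C.Minimal) (hw : w ∈ C.Wld) (B : Finset A)
    (hB : B.Nonempty) :
    C.sat w (((Form.aliveGrp B hB).and (Form.deadGrp Bᶜ)).imp
      (Form.dk B hB (Form.deadGrp Bᶜ)) : Form A AP) := by
  simp only [sat_imp, sat_and, sat_dk, sat_deadGrp_compl hw]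
  rintro ⟨-, hwB⟩ w' hw' hshare
  have : w = w' := ((hmin w).1 hw).2 w' (hM.2.2 hw') (hshare.subset (hM.injOn_chi hw) hwB)
  rwa [sat_deadGrp_compl hw', ← this]

end Axioms

end SimpData

open SimpData in
theorem Prf.sound {A AP V : Type} [Fintype A] [Nonempty AP] {C : SimpData A AP V}
    {Ax : Form A AP → Prop} (hM : C.IsModel) (hAx : ∀ φ, Ax φ → ∀ w ∈ C.Wld, C.sat w φ)
    {φ : Form A AP} (h : Prf Ax φ) : ∀ w ∈ C.Wld, C.sat w φ := by
  induction h with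
  | taut h => exact fun w _ => h (C.sat w) (fun _ => Iff.rfl) (fun _ _ => Iff.rfl)
  | mp _ _ ih₁ ih₂ => exact fun w hw => (sat_imp _ _).1 (ih₁ w hw) (ih₂ w hw)
  | nec _ _ _ ih => exact fun _ _ w' hw' _ => ih w' hw'
  | axK _ _ =>
    intro w _
    simp only [sat_imp, sat_dk]
    exact fun h₁ h₂ w' hw' hs => h₁ w' hw' hs (h₂ w' hw' hs)
  | axB _ _ =>
    intro w hw
    simp only [sat_imp, sat_dk, sat_neg]
    exact fun hφ _ _ hs h => h w hw hs.symm hφ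
  | ax4 _ _ =>
    intro w _
    simp only [sat_imp, sat_dk]
    exact fun h _ hw' hs _ hw'' hs' => h _ hw'' (hs.trans (hM.injOn_chi hw') hs')
  | axMono _ _ _ _ hsub =>
    intro w _
    simp only [sat_imp, sat_dk]
    exact fun h w' hw' hs => h w' hw' (hs.mono hsub)
  | axUnion =>
    intro w hw
    simp only [sat_imp, sat_and, sat_aliveGrp hw, Finset.coe_union]
    exact fun ⟨h, h'⟩ => Set.union_subset h h'
  | axNE => exact fun w hw => sat_axNE hM hw
  | axP B hB => exact fun w hw => sat_axP hM hw B hB _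
  | extra h => exact hAx _ h

/-- Soundness of Axiom `Min` for minimal simplicial models, and hence
soundness of the proof system `SCmin` with respect to minimal simplicial models. -/
theorem soundness_SCmin (A AP : Type) [Fintype A] [Nonempty AP] :
    (∀ (V : Type) (C : SimpData A AP V), C.IsModel → C.Minimal →
      ∀ w ∈ C.Wld, ∀ (B : Finset A) (hB : B.Nonempty), B ≠ Finset.univ →
        C.sat w (((Form.aliveGrp B hB).and (Form.deadGrp Bᶜ)).imp
          (Form.dk B hB (Form.deadGrp Bᶜ)))) ∧
    (∀ φ : Form A AP, SCmin φ →
      ∀ (V : Type) (C : SimpData A AP V), C.IsModel → C.Minimal →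
        ∀ w ∈ C.Wld, C.sat w φ) := by
  refine ⟨fun V C hM hmin w hw B hB _ => SimpData.sat_minAx hM hmin hw B hB,
    fun φ hφ V C hM hmin => Prf.sound hM ?_ hφ⟩
  rintro _ ⟨B, hB, -, rfl⟩ w hw
  exact SimpData.sat_minAx hM hmin hw B hB
end

section
/- Truth equivalence between simplicial models and partial epistemic models: (1) for every pointed simplicial model (C,w) and every formula φ of L_D, C,w ⊨ φ iff κ(C),w ⊨ φ; (2) for every pointed partial epistemic model (M,w) that is proper and has no empty world, and every formula φ of L_D, M,w ⊨ φ iff σ(M),X_w ⊨ φ. -/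
attribute [local instance] Classical.propDecidable

/- Both halves are instances of one truth lemma: a map `f` from the worlds of a partial
epistemic model onto the worlds of a simplicial model preserves truth as soon as it preserves
labels and `w ∼_a w'` holds exactly when the worlds `f w` and `f w'` share an `a`-coloured
vertex. For `κ(C)` this holds by definition; for `σ(M)` the vertex `v^w_a = (a, [w]_a)` lies
in `X_{w'}` exactly when `w ∼_a w'`, and properness makes `w ↦ X_w` injective, so that the
labelling of `σ(M)` is well defined. -/

section TruthLemma

variable {A AP W V : Type}

theorem PEData.sat_iff_sat_of_worldMap (M : PEData A AP W) (C : SimpData A AP V)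
    (f : W → Finset V) (hrange : Set.range f = C.Wld)
    (hlabel : ∀ w, C.label (f w) = M.label w)
    (hrel : ∀ a w w', a ∈ C.chi '' ((↑(f w) : Set V) ∩ ↑(f w')) ↔ M.rel a w w')
    (w : W) (φ : Form A AP) : M.sat w φ ↔ C.sat (f w) φ := by
  induction φ generalizing w with
  | atom p => simp only [PEData.sat, SimpData.sat, hlabel]
  | neg φ ih => exact not_congr (ih w)
  | and φ ψ ihφ ihψ => exact and_congr (ihφ w) (ihψ w)
  | dk B _ φ ih =>
    simp only [PEData.sat, SimpData.sat, ← hrange, Set.forall_mem_range, Set.subset_def,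
      Finset.mem_coe, hrel, ih]

theorem sat_iff_kappa_sat (C : SimpData A AP V) (w : {w : Finset V // w ∈ C.Wld})
    (φ : Form A AP) : C.sat w.1 φ ↔ (kappa C).sat w φ :=
  ((kappa C).sat_iff_sat_of_worldMap C Subtype.val Subtype.range_coe (fun _ => rfl)
    (fun _ _ _ => Iff.rfl) w φ).symm

end TruthLemma

section Sigma

variable {A AP W : Type} [Fintype A]

theorem mem_sigmaWorld (M : PEData A AP W) (w : W) (v : sigmaVert M) :
    v ∈ sigmaWorld M w ↔ M.rel v.1.1 w w ∧ v.1.2 = {w' | M.rel v.1.1 w w'} := by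
  constructor
  · intro hv
    obtain ⟨a, -, rfl⟩ := Finset.mem_image.mp hv
    exact ⟨(Finset.mem_filter.mp a.2).2, rfl⟩
  · rintro ⟨hlive, hclass⟩
    refine Finset.mem_image.mpr
      ⟨⟨v.1.1, Finset.mem_filter.mpr ⟨Finset.mem_univ _, hlive⟩⟩, Finset.mem_attach _ _, ?_⟩
    exact Subtype.ext (Prod.ext rfl hclass.symm)

theorem alive_and_rel_of_sigmaWorld_eq (M : PEData A AP W) {w w' : W}
    (h : sigmaWorld M w = sigmaWorld M w') {a : A} (ha : a ∈ M.live w) :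
    a ∈ M.live w' ∧ M.rel a w w' := by
  have hv : (⟨(a, {x | M.rel a w x}), w, ha, rfl⟩ : sigmaVert M) ∈ sigmaWorld M w' :=
    h ▸ (mem_sigmaWorld M w _).mpr ⟨ha, rfl⟩
  obtain ⟨hlive', hclass⟩ := (mem_sigmaWorld M w' _).mp hv
  have hclass' : {x | M.rel a w x} = {x | M.rel a w' x} := hclass
  exact ⟨hlive', show w' ∈ {x | M.rel a w x} from hclass' ▸ hlive'⟩

theorem sigmaWorld_injective (M : PEData A AP W) (hP : M.Proper) :
    Function.Injective (sigmaWorld M) := by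
  intro w w' h
  by_contra hne
  have hlive : M.live w = M.live w' := Set.ext fun a =>
    ⟨fun ha => (alive_and_rel_of_sigmaWorld_eq M h ha).1,
      fun ha => (alive_and_rel_of_sigmaWorld_eq M h.symm ha).1⟩
  obtain ⟨a, ha, hnrel⟩ := hP w w' hne hlive
  exact hnrel (alive_and_rel_of_sigmaWorld_eq M h ha).2

theorem sigmaModel_label_sigmaWorld (M : PEData A AP W) (hP : M.Proper) (w : W) :
    (sigmaModel M).label (sigmaWorld M w) = M.label w := by
  ext p
  constructor
  · rintro ⟨w', hw', hp⟩
    rwa [sigmaWorld_injective M hP hw']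
  · exact fun hp => ⟨w, rfl, hp⟩

theorem mem_chi_sigmaWorld_inter_iff (M : PEData A AP W) (hPE : M.IsPE) (a : A) (w w' : W) :
    a ∈ (sigmaModel M).chi '' ((↑(sigmaWorld M w) : Set (sigmaVert M)) ∩ ↑(sigmaWorld M w'))
      ↔ M.rel a w w' := by
  obtain ⟨hsymm, htrans⟩ := hPE a
  constructor
  · rintro ⟨v, ⟨hv, hv'⟩, rfl⟩
    obtain ⟨-, hclass⟩ := (mem_sigmaWorld M w v).mp hv
    obtain ⟨hlive', hclass'⟩ := (mem_sigmaWorld M w' v).mp hv'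
    have hw' : w' ∈ v.1.2 := hclass' ▸ hlive'
    rwa [hclass] at hw'
  · intro hrel
    have hclass : {x | M.rel a w x} = {x | M.rel a w' x} :=
      Set.ext fun _ => ⟨htrans (hsymm hrel), htrans hrel⟩
    refine ⟨⟨(a, {x | M.rel a w x}), w, htrans hrel (hsymm hrel), rfl⟩, ⟨?_, ?_⟩, rfl⟩
    · exact (mem_sigmaWorld M w _).mpr ⟨htrans hrel (hsymm hrel), rfl⟩
    · exact (mem_sigmaWorld M w' _).mpr ⟨htrans (hsymm hrel) hrel, hclass⟩

theorem sat_iff_sigmaModel_sat (M : PEData A AP W) (hPE : M.IsPE) (hP : M.Proper) (w : W)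
    (φ : Form A AP) : M.sat w φ ↔ (sigmaModel M).sat (sigmaWorld M w) φ :=
  M.sat_iff_sat_of_worldMap (sigmaModel M) (sigmaWorld M)
    (Set.ext fun _ => exists_congr fun _ => eq_comm)
    (sigmaModel_label_sigmaWorld M hP) (mem_chi_sigmaWorld_inter_iff M hPE) w φ

end Sigma

/-- Truth equivalence between simplicial models and partial epistemic
models: (1) `C,w ⊨ φ` iff `κ(C),w ⊨ φ`; (2) for `M` proper with no empty world,
`M,w ⊨ φ` iff `σ(M),X_w ⊨ φ`. -/
theorem truth_equivalence (A AP : Type) [Fintype A] :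
    (∀ (V : Type) (C : SimpData A AP V), C.IsModel →
      ∀ (w : {w : Finset V // w ∈ C.Wld}) (φ : Form A AP),
        C.sat w.1 φ ↔ (kappa C).sat w φ) ∧
    (∀ (W : Type) (M : PEData A AP W), M.IsPE → M.Proper → M.NoEmptyWorld →
      ∀ (w : W) (φ : Form A AP),
        M.sat w φ ↔ (sigmaModel M).sat (sigmaWorld M w) φ) :=
  ⟨fun _ C _ => sat_iff_kappa_sat C,
    fun _ M hPE hP _ => sat_iff_sigmaModel_sat M hPE hP⟩
end
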